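/- arXiv:1806.03597 — 4 statements merged into one kernel-verified Lean document; each statement's English description precedes it below -/
import Mathlib

section
/- Let Λ = (W_j, Λ_j, v_j) be a g-fusion frame for H with frame operator S_Λ, and for I ⊆ J define S_I f = Σ_{j∈I} v_j² π_{W_j} Λ_j* Λ_j π_{W_j} f. Then for all f ∈ H: Σ_{j∈I} v_j² ‖Λ_j π_{W_j} f‖² + ‖S_Λ^{-1/2} S_{Iᶜ} f‖² = Σ_{j∈Iᶜ} v_j² ‖Λ_j π_{W_j} f‖² + ‖S_Λ^{-1/2} S_I f‖². -/
/-!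
Put `u = S_I f`, `w = S_{Iᶜ} f` and let `R = S_Λ^{-1/2}`. Each weighted sum over `I` is
`Re ⟪f, S_I f⟫` (similarly for `Iᶜ`), and `u + w = S_Λ f`, so `f = R (R (u + w))`. Moving one `R`
across the inner product, the identity becomes
`Re ⟪R u + R w, R u⟫ + ‖R w‖² = Re ⟪R u + R w, R w⟫ + ‖R u‖²`,
both sides being `‖R u‖² + Re ⟪R u, R w⟫ + ‖R w‖²`.
-/

open ContinuousLinearMap

/-- Orthogonal projection onto a complete subspace, as an operator on the whole space. -/
noncomputable def pProj {H : Type*} [NormedAddCommGroup H] [InnerProductSpace ℂ H]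
    (V : Submodule ℂ H) [CompleteSpace V] : H →L[ℂ] H :=
  V.subtypeL ∘L V.orthogonalProjectionOnto

open scoped InnerProductSpace

theorem LinearMap.IsSymmetric.re_inner_add_norm_sq_eq {𝕜 E : Type*} [RCLike 𝕜]
    [NormedAddCommGroup E] [InnerProductSpace 𝕜 E] {R : E →ₗ[𝕜] E} (hR : R.IsSymmetric)
    (u w : E) :
    RCLike.re ⟪R (R (u + w)), u⟫_𝕜 + ‖R w‖ ^ 2 = RCLike.re ⟪R (R (u + w)), w⟫_𝕜 + ‖R u‖ ^ 2 := by
  rw [hR (R (u + w)) u, hR (R (u + w)) w, map_add, inner_add_left, inner_add_left,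
    map_add, map_add, inner_self_eq_norm_sq, inner_self_eq_norm_sq, inner_re_symm (R w)]
  ring

theorem pProj_eq_starProjection {H : Type*} [NormedAddCommGroup H] [InnerProductSpace ℂ H]
    (V : Submodule ℂ H) [CompleteSpace V] : pProj V = V.starProjection := rfl

theorem inner_pProj_adjoint_apply {H E : Type*} [NormedAddCommGroup H] [InnerProductSpace ℂ H]
    [CompleteSpace H] [NormedAddCommGroup E] [InnerProductSpace ℂ E]
    [CompleteSpace E] (V : Submodule ℂ H) [CompleteSpace V] (T : H →L[ℂ] E) (f : H) :
    ⟪f, pProj V (adjoint T (T (pProj V f)))⟫_ℂ = (‖T (pProj V f)‖ ^ 2 : ℝ) := by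
  rw [pProj_eq_starProjection, ← Submodule.inner_starProjection_left_eq_right, adjoint_inner_right,
    inner_self_eq_norm_sq_to_K]
  norm_cast

theorem HasSum.re_inner_right {ι 𝕜 H : Type*} [RCLike 𝕜] [NormedAddCommGroup H]
    [InnerProductSpace 𝕜 H] {g : ι → H} {x : H} (h : HasSum g x) (f : H) :
    HasSum (fun j => RCLike.re ⟪f, g j⟫_𝕜) (RCLike.re ⟪f, x⟫_𝕜) :=
  RCLike.reCLM.hasSum ((innerSL 𝕜 f).hasSum h)

theorem tsum_weighted_norm_sq_eq_re_inner {κ H : Type*} [NormedAddCommGroup H]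
    [InnerProductSpace ℂ H] [CompleteSpace H] {E : κ → Type*} [∀ k, NormedAddCommGroup (E k)]
    [∀ k, InnerProductSpace ℂ (E k)] [∀ k, CompleteSpace (E k)]
    (V : κ → Submodule ℂ H) [∀ k, CompleteSpace (V k)]
    (c : κ → ℝ) (T : ∀ k, H →L[ℂ] E k) {f x : H}
    (h : HasSum (fun k => ((c k : ℂ) ^ 2) • pProj (V k) (adjoint (T k) (T k (pProj (V k) f)))) x) :
    ∑' k, c k ^ 2 * ‖T k (pProj (V k) f)‖ ^ 2 = RCLike.re ⟪f, x⟫_ℂ := by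
  refine HasSum.tsum_eq ?_
  convert h.re_inner_right f using 2 with k
  rw [inner_smul_right, inner_pProj_adjoint_apply]
  norm_cast

theorem stmt12_general {H : Type*} [NormedAddCommGroup H] [InnerProductSpace ℂ H] [CompleteSpace H]
    {ι : Type*} {Hs : ι → Type*} [∀ j, NormedAddCommGroup (Hs j)]
    [∀ j, InnerProductSpace ℂ (Hs j)] [∀ j, CompleteSpace (Hs j)]
    (W : ι → Submodule ℂ H) [∀ j, CompleteSpace (W j)]
    (v : ι → ℝ)
    (Λ : ∀ j, H →L[ℂ] Hs j)
    (SΛ Sinv : H →L[ℂ] H)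
    (hSΛ : ∀ f : H,
      HasSum (fun j => ((v j : ℂ) ^ 2) • pProj (W j) (adjoint (Λ j) (Λ j (pProj (W j) f)))) (SΛ f))
    (hinv₁ : Sinv ∘L SΛ = 1)
    (R : H →L[ℂ] H) (hR : R.IsPositive) (hRR : R ∘L R = Sinv)
    (I : Set ι) (SI SIc : H →L[ℂ] H)
    (hSI : ∀ f : H,
      HasSum (fun j : I => ((v j : ℂ) ^ 2) •
        pProj (W j) (adjoint (Λ j) (Λ j (pProj (W j) f)))) (SI f))
    (hSIc : ∀ f : H,
      HasSum (fun j : ↥Iᶜ => ((v j : ℂ) ^ 2) •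
        pProj (W j) (adjoint (Λ j) (Λ j (pProj (W j) f)))) (SIc f)) :
    ∀ f : H,
      (∑' j : I, (v j) ^ 2 * ‖Λ j (pProj (W j) f)‖ ^ 2) + ‖R (SIc f)‖ ^ 2 =
        (∑' j : ↥Iᶜ, (v j) ^ 2 * ‖Λ j (pProj (W j) f)‖ ^ 2) + ‖R (SI f)‖ ^ 2 := by
  intro f
  have hsplit : SI f + SIc f = SΛ f :=
    (HasSum.add_compl (f := fun j => ((v j : ℂ) ^ 2) •
      pProj (W j) (adjoint (Λ j) (Λ j (pProj (W j) f)))) (hSI f) (hSIc f)).unique (hSΛ f)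
  have hf : R (R (SI f + SIc f)) = f := by
    rw [hsplit, ← comp_apply, hRR, ← comp_apply, hinv₁]
    rfl
  rw [tsum_weighted_norm_sq_eq_re_inner (fun j : I => W j) (fun j => v j) (fun j => Λ j) (hSI f),
    tsum_weighted_norm_sq_eq_re_inner (fun j : ↥Iᶜ => W j) (fun j => v j) (fun j => Λ j) (hSIc f)]
  simpa only [coe_coe, hf] using hR.isSymmetric.re_inner_add_norm_sq_eq (SI f) (SIc f)

theorem stmt12 {H : Type*} [NormedAddCommGroup H] [InnerProductSpace ℂ H] [CompleteSpace H]
    {ι : Type*} {Hs : ι → Type*} [∀ j, NormedAddCommGroup (Hs j)]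
    [∀ j, InnerProductSpace ℂ (Hs j)] [∀ j, CompleteSpace (Hs j)]
    (W : ι → Submodule ℂ H) [∀ j, CompleteSpace (W j)]
    (v : ι → ℝ) (hv : ∀ j, 0 < v j)
    (Λ : ∀ j, H →L[ℂ] Hs j) (A B : ℝ) (hA : 0 < A) (hAB : A ≤ B)
    (hsum : ∀ f : H, Summable fun j => (v j) ^ 2 * ‖Λ j (pProj (W j) f)‖ ^ 2)
    (hlow : ∀ f : H, A * ‖f‖ ^ 2 ≤ ∑' j, (v j) ^ 2 * ‖Λ j (pProj (W j) f)‖ ^ 2)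
    (hup : ∀ f : H, ∑' j, (v j) ^ 2 * ‖Λ j (pProj (W j) f)‖ ^ 2 ≤ B * ‖f‖ ^ 2)
    (SΛ Sinv : H →L[ℂ] H)
    (hSΛ : ∀ f : H,
      HasSum (fun j => ((v j : ℂ) ^ 2) • pProj (W j) (adjoint (Λ j) (Λ j (pProj (W j) f)))) (SΛ f))
    (hSΛpos : SΛ.IsPositive)
    (hinv₁ : Sinv ∘L SΛ = 1) (hinv₂ : SΛ ∘L Sinv = 1)
    (R : H →L[ℂ] H) (hR : R.IsPositive) (hRR : R ∘L R = Sinv)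
    (I : Set ι) (SI SIc : H →L[ℂ] H)
    (hSI : ∀ f : H,
      HasSum (fun j : I => ((v j : ℂ) ^ 2) •
        pProj (W j) (adjoint (Λ j) (Λ j (pProj (W j) f)))) (SI f))
    (hSIc : ∀ f : H,
      HasSum (fun j : ↥Iᶜ => ((v j : ℂ) ^ 2) •
        pProj (W j) (adjoint (Λ j) (Λ j (pProj (W j) f)))) (SIc f)) :
    ∀ f : H,
      (∑' j : I, (v j) ^ 2 * ‖Λ j (pProj (W j) f)‖ ^ 2) + ‖R (SIc f)‖ ^ 2 =
        (∑' j : ↥Iᶜ, (v j) ^ 2 * ‖Λ j (pProj (W j) f)‖ ^ 2) + ‖R (SI f)‖ ^ 2 :=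
  stmt12_general W v Λ SΛ Sinv hSΛ hinv₁ R hR hRR I SI SIc hSI hSIc
end

section
/- Let Λ be a g-fusion frame for H with frame operator S_Λ and partial sum operators S_I (I ⊆ J) as above. Then 0 ≤ S_I − S_I S_Λ⁻¹ S_I ≤ (1/4) S_Λ in the operator order. -/
/-!
Since each term `v_j² π_{W_j} Λ_j* Λ_j π_{W_j}` is positive, the partial sum satisfies
`0 ≤ S_I ≤ S_Λ`, and the claim holds for any such pair `t = S_I`, `s = S_Λ` in a star-ordered
ring, through the identities
`t - t s⁻¹ t = (1 - s⁻¹t)* t (1 - s⁻¹t) + (s⁻¹t)* (s - t) (s⁻¹t)` and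
`s - 4 (t - t s⁻¹ t) = (2 s⁻¹t - 1)* s (2 s⁻¹t - 1)`.
-/

open ContinuousLinearMap

section StarRing

variable {R : Type*} [Ring R] [StarRing R] {s r t : R}

theorem IsSelfAdjoint.star_eq_and_mul_eq_one_of_mul_eq_one (hs : IsSelfAdjoint s)
    (h : s * r = 1) : star r = r ∧ r * s = 1 := by
  have hl : star r * s = 1 := by simpa [hs.star_eq] using congrArg star h
  have hr : star r = r :=
    calc star r = star r * (s * r) := by rw [h, mul_one]
      _ = r := by rw [← mul_assoc, hl, one_mul]
  exact ⟨hr, hr ▸ hl⟩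

theorem sub_mul_mul_eq_star_conj_add_star_conj (hr : star r = r) (ht : star t = t)
    (hrs : r * s = 1) :
    t - t * r * t = star (1 - r * t) * t * (1 - r * t) + star (r * t) * (s - t) * (r * t) := by
  have hrs' (x : R) : r * (s * x) = x := by rw [← mul_assoc, hrs, one_mul]
  simp only [star_sub, star_one, star_mul, hr, ht]
  noncomm_ring
  simp only [hrs']
  abel

theorem sub_four_mul_eq_star_conj (hr : star r = r) (ht : star t = t) (hrs : r * s = 1)
    (hsr : s * r = 1) :
    s - 4 * (t - t * r * t) = star (2 * r * t - 1) * s * (2 * r * t - 1) := by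
  have hsr' (x : R) : s * (r * x) = x := by rw [← mul_assoc, hsr, one_mul]
  simp only [star_sub, star_one, star_mul, star_ofNat, hr, ht]
  noncomm_ring
  simp only [hrs, hsr', mul_one]
  abel

variable [PartialOrder R] [StarOrderedRing R]

theorem sub_mul_mul_nonneg_and_four_mul_le (ht : 0 ≤ t) (hts : t ≤ s) (hsr : s * r = 1) :
    0 ≤ t - t * r * t ∧ 4 * (t - t * r * t) ≤ s := by
  have hs : 0 ≤ s := ht.trans hts
  obtain ⟨hr, hrs⟩ := (IsSelfAdjoint.of_nonneg hs).star_eq_and_mul_eq_one_of_mul_eq_one hsr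
  have ht' : star t = t := (IsSelfAdjoint.of_nonneg ht).star_eq
  constructor
  · rw [sub_mul_mul_eq_star_conj_add_star_conj hr ht' hrs]
    exact add_nonneg (star_left_conjugate_nonneg ht _)
      (star_left_conjugate_nonneg (sub_nonneg.mpr hts) _)
  · rw [← sub_nonneg, sub_four_mul_eq_star_conj hr ht' hrs hsr]
    exact star_left_conjugate_nonneg hs _

end StarRing

theorem ContinuousLinearMap.isPositive_of_hasSum {𝕜 E κ : Type*} [RCLike 𝕜]
    [NormedAddCommGroup E] [InnerProductSpace 𝕜 E] {T : κ → E →L[𝕜] E} {S : E →L[𝕜] E}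
    (hT : ∀ j, (T j).IsPositive) (hS : ∀ x, HasSum (fun j => T j x) (S x)) : S.IsPositive := by
  have hleft (x y : E) : HasSum (fun j => inner 𝕜 (T j x) y) (inner 𝕜 (S x) y) := by
    simpa only [innerSLFlip_apply_apply] using (innerSLFlip 𝕜 y).hasSum (hS x)
  have hright (x y : E) : HasSum (fun j => inner 𝕜 x (T j y)) (inner 𝕜 x (S y)) := by
    simpa only [innerSL_apply_apply] using (innerSL 𝕜 x).hasSum (hS y)
  refine ⟨fun x y => ?_, fun x => ?_⟩
  · change inner 𝕜 (S x) y = inner 𝕜 x (S y)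
    refine (hleft x y).unique ?_
    simpa only [(hT _).inner_left_eq_inner_right] using hright x y
  · exact ((RCLike.reCLM : 𝕜 →L[ℝ] ℝ).hasSum (hleft x x)).nonneg fun j => (hT j).2 x

theorem isPositive_smul_sq_pProj_adjoint_comp {H K : Type*} [NormedAddCommGroup H]
    [InnerProductSpace ℂ H] [CompleteSpace H] [NormedAddCommGroup K] [InnerProductSpace ℂ K]
    [CompleteSpace K] (W : Submodule ℂ H) [CompleteSpace W] (Λ : H →L[ℂ] K) (c : ℝ) :
    (((c : ℂ) ^ 2) • (pProj W ∘L adjoint Λ ∘L Λ ∘L pProj W)).IsPositive := by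
  have hP : adjoint (pProj W) = pProj W := (isSelfAdjoint_starProjection W).adjoint_eq
  have hconj : pProj W ∘L adjoint Λ ∘L Λ ∘L pProj W
      = adjoint (Λ ∘L pProj W) ∘L (Λ ∘L pProj W) := by
    rw [adjoint_comp, hP, comp_assoc]
  rw [hconj]
  refine (isPositive_adjoint_comp_self _).smul_of_nonneg ?_
  exact_mod_cast sq_nonneg c

theorem ContinuousLinearMap.isPositive_one_div_four_smul_sub_of_four_mul_le {E : Type*}
    [NormedAddCommGroup E] [InnerProductSpace ℂ E] {S D : E →L[ℂ] E} (h : 4 * D ≤ S) :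
    ((1 / 4 : ℂ) • S - D).IsPositive := by
  have h4 : 4 * D = (4 : ℂ) • D := by rw [ofNat_smul_eq_nsmul ℂ 4, nsmul_eq_mul, Nat.cast_ofNat]
  have hquarter : (1 / 4 : ℂ) • S - D = (1 / 4 : ℂ) • (S - 4 * D) := by
    rw [h4]
    module
  rw [hquarter]
  exact ((le_def _ _).mp h).smul_of_nonneg (by norm_num [Complex.nonneg_iff])

theorem stmt13_general {H : Type*} [NormedAddCommGroup H] [InnerProductSpace ℂ H] [CompleteSpace H]
    {ι : Type*} {Hs : ι → Type*} [∀ j, NormedAddCommGroup (Hs j)]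
    [∀ j, InnerProductSpace ℂ (Hs j)] [∀ j, CompleteSpace (Hs j)]
    (W : ι → Submodule ℂ H) [∀ j, CompleteSpace (W j)]
    (v : ι → ℝ)
    (Λ : ∀ j, H →L[ℂ] Hs j)
    (SΛ Sinv : H →L[ℂ] H)
    (hSΛ : ∀ f : H,
      HasSum (fun j => ((v j : ℂ) ^ 2) • pProj (W j) (adjoint (Λ j) (Λ j (pProj (W j) f)))) (SΛ f))
    (hinv₂ : SΛ ∘L Sinv = 1)
    (I : Set ι) (SI : H →L[ℂ] H)
    (hSI : ∀ f : H,
      HasSum (fun j : I => ((v j : ℂ) ^ 2) •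
        pProj (W j) (adjoint (Λ j) (Λ j (pProj (W j) f)))) (SI f)) :
    (SI - (SI ∘L Sinv) ∘L SI).IsPositive ∧
      ((1 / 4 : ℂ) • SΛ - (SI - (SI ∘L Sinv) ∘L SI)).IsPositive := by
  set T : ι → H →L[ℂ] H :=
    fun j => ((v j : ℂ) ^ 2) • (pProj (W j) ∘L adjoint (Λ j) ∘L Λ j ∘L pProj (W j))
  have hT (j : ι) : (T j).IsPositive := isPositive_smul_sq_pProj_adjoint_comp (W j) (Λ j) (v j)
  have hSI_nonneg : 0 ≤ SI :=
    (nonneg_iff_isPositive SI).mpr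
      (isPositive_of_hasSum (T := fun j : I => T j) (fun j => hT j) hSI)
  have hSI_le : SI ≤ SΛ :=
    isPositive_of_hasSum (T := fun j : ↥Iᶜ => T j) (fun j => hT j)
      fun f => (HasSum.hasSum_iff_compl (f := fun j => T j f) (hSI f)).mp (hSΛ f)
  obtain ⟨hlow, hup⟩ := sub_mul_mul_nonneg_and_four_mul_le hSI_nonneg hSI_le hinv₂
  exact ⟨(nonneg_iff_isPositive _).mp hlow, isPositive_one_div_four_smul_sub_of_four_mul_le hup⟩

theorem stmt13 {H : Type*} [NormedAddCommGroup H] [InnerProductSpace ℂ H] [CompleteSpace H]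
    {ι : Type*} {Hs : ι → Type*} [∀ j, NormedAddCommGroup (Hs j)]
    [∀ j, InnerProductSpace ℂ (Hs j)] [∀ j, CompleteSpace (Hs j)]
    (W : ι → Submodule ℂ H) [∀ j, CompleteSpace (W j)]
    (v : ι → ℝ) (hv : ∀ j, 0 < v j)
    (Λ : ∀ j, H →L[ℂ] Hs j) (A B : ℝ) (hA : 0 < A) (hAB : A ≤ B)
    (hsum : ∀ f : H, Summable fun j => (v j) ^ 2 * ‖Λ j (pProj (W j) f)‖ ^ 2)
    (hlow : ∀ f : H, A * ‖f‖ ^ 2 ≤ ∑' j, (v j) ^ 2 * ‖Λ j (pProj (W j) f)‖ ^ 2)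
    (hup : ∀ f : H, ∑' j, (v j) ^ 2 * ‖Λ j (pProj (W j) f)‖ ^ 2 ≤ B * ‖f‖ ^ 2)
    (SΛ Sinv : H →L[ℂ] H)
    (hSΛ : ∀ f : H,
      HasSum (fun j => ((v j : ℂ) ^ 2) • pProj (W j) (adjoint (Λ j) (Λ j (pProj (W j) f)))) (SΛ f))
    (hSΛpos : SΛ.IsPositive)
    (hinv₁ : Sinv ∘L SΛ = 1) (hinv₂ : SΛ ∘L Sinv = 1)
    (I : Set ι) (SI : H →L[ℂ] H)
    (hSI : ∀ f : H,
      HasSum (fun j : I => ((v j : ℂ) ^ 2) •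
        pProj (W j) (adjoint (Λ j) (Λ j (pProj (W j) f)))) (SI f)) :
    (SI - (SI ∘L Sinv) ∘L SI).IsPositive ∧
      ((1 / 4 : ℂ) • SΛ - (SI - (SI ∘L Sinv) ∘L SI)).IsPositive :=
  stmt13_general W v Λ SΛ Sinv hSΛ hinv₂ I SI hSI
end

section
/- Let Λ be a g-fusion frame for H with frame operator S_Λ and partial sum operators S_I as above. Then for all f ∈ H: Σ_{j∈I} v_j² ‖Λ_j π_{W_j} f‖² + ‖S_Λ^{-1/2} S_{Iᶜ} f‖² ≥ (3/4) ‖S_Λ⁻¹‖⁻¹ ‖f‖². -/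
open ContinuousLinearMap

/-! With `h := S_Λ^{1/2} f` we have `f = S_Λ^{-1/2} h`, so `‖f‖² ≤ ‖S_Λ⁻¹‖ ‖h‖²`, and
`‖h‖² = ⟪f, S_Λ f⟫ = a + t` with `a = Σ_{j∈I} v_j² ‖Λ_j π_{W_j} f‖²` and
`t = ⟪f, S_{Iᶜ} f⟫ = ⟪h, S_Λ^{-1/2} S_{Iᶜ} f⟫ ≤ ‖h‖ r`, where `r = ‖S_Λ^{-1/2} S_{Iᶜ} f‖`.
Hence `a + r² ≥ ‖h‖² - ‖h‖ r + r² = (r - ‖h‖/2)² + 3/4 ‖h‖² ≥ 3/4 ‖h‖²`. -/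

theorem mul_mul_eq_one_of_mul_self_eq_inverse {M : Type*} [Monoid M] {r s t : M}
    (hr : r * r = t) (hts : t * s = 1) (hst : s * t = 1) : r * (s * r) = 1 :=
  calc r * (s * r) = r * (s * r) * (t * s) := by rw [hts, mul_one]
    _ = r * (s * t) * (r * s) := by rw [← hr]; simp only [mul_assoc]
    _ = 1 := by rw [hst, mul_one, ← mul_assoc, hr, hts]

theorem three_quarters_mul_inv_mul_le {K F n a t r : ℝ} (hK : 0 ≤ K) (hF : F ≤ K * n ^ 2)
    (hsplit : a + t = n ^ 2) (ht : t ≤ n * r) : 3 / 4 * K⁻¹ * F ≤ a + r ^ 2 := by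
  have hFn : K⁻¹ * F ≤ n ^ 2 := by
    rcases hK.eq_or_lt with rfl | hKpos
    · simpa using sq_nonneg n
    · exact inv_mul_le_of_le_mul₀ hKpos.le (sq_nonneg n) hF
  nlinarith [sq_nonneg (r - n / 2)]

section WeightedSum

variable {H : Type*} [NormedAddCommGroup H] [InnerProductSpace ℂ H]

theorem inner_pProj_left (V : Submodule ℂ H) [CompleteSpace V] (x y : H) :
    inner ℂ (pProj V x) y = inner ℂ x (pProj V y) :=
  Submodule.inner_starProjection_left_eq_right V x y

theorem re_inner_smul_pProj_adjoint {E : Type*} [NormedAddCommGroup E] [InnerProductSpace ℂ E]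
    [CompleteSpace H] [CompleteSpace E] (T : H →L[ℂ] E) (c : ℝ) (V : Submodule ℂ H)
    [CompleteSpace V] (f : H) :
    (inner ℂ f (((c : ℂ) ^ 2) • pProj V (adjoint T (T (pProj V f))))).re
      = c ^ 2 * ‖T (pProj V f)‖ ^ 2 := by
  rw [inner_smul_right, ← inner_pProj_left, adjoint_inner_right, ← Complex.ofReal_pow,
    Complex.re_ofReal_mul, ← RCLike.re_to_complex, inner_self_eq_norm_sq]

theorem HasSum.re_inner_right_s14 {κ : Type*} {g : κ → H} {x : H} (hg : HasSum g x) (f : H) :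
    HasSum (fun j => (inner ℂ f (g j)).re) (inner ℂ f x).re :=
  Complex.reCLM.hasSum ((innerSL ℂ f).hasSum hg)

theorem hasSum_weighted_norm_sq [CompleteSpace H] {κ : Type*} {E : κ → Type*}
    [∀ j, NormedAddCommGroup (E j)] [∀ j, InnerProductSpace ℂ (E j)] [∀ j, CompleteSpace (E j)]
    (W : κ → Submodule ℂ H) [∀ j, CompleteSpace (W j)] (v : κ → ℝ) (Λ : ∀ j, H →L[ℂ] E j)
    {f y : H}
    (hy : HasSum (fun j => ((v j : ℂ) ^ 2) • pProj (W j) (adjoint (Λ j) (Λ j (pProj (W j) f)))) y) :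
    HasSum (fun j => v j ^ 2 * ‖Λ j (pProj (W j) f)‖ ^ 2) (inner ℂ f y).re := by
  simpa only [re_inner_smul_pProj_adjoint] using hy.re_inner_right_s14 f

end WeightedSum

section SelfAdjoint

variable {H : Type*} [NormedAddCommGroup H] [InnerProductSpace ℂ H] [CompleteSpace H]
  {R : H →L[ℂ] H}

theorem re_inner_apply_apply_eq_norm_sq (hR : IsSelfAdjoint R) {S : H →L[ℂ] H}
    (hRSR : R * (S * R) = 1) (h : H) : (inner ℂ (R h) (S (R h))).re = ‖h‖ ^ 2 := by
  rw [← adjoint_inner_right, hR.adjoint_eq, show R (S (R h)) = h from congr($hRSR h),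
    inner_self_eq_norm_sq_to_K]
  norm_cast

theorem re_inner_apply_le_norm_mul_norm (hR : IsSelfAdjoint R) (h y : H) :
    (inner ℂ (R h) y).re ≤ ‖h‖ * ‖R y‖ := by
  rw [← adjoint_inner_right, hR.adjoint_eq]
  exact (Complex.re_le_norm _).trans (norm_inner_le_norm _ _)

theorem norm_apply_sq_le_norm_mul_self_mul (hR : IsSelfAdjoint R) (h : H) :
    ‖R h‖ ^ 2 ≤ ‖R * R‖ * ‖h‖ ^ 2 := by
  rw [hR.norm_mul_self, ← mul_pow]
  gcongr
  exact R.le_opNorm h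

end SelfAdjoint

theorem stmt14_general {H : Type*} [NormedAddCommGroup H] [InnerProductSpace ℂ H] [CompleteSpace H]
    {ι : Type*} {Hs : ι → Type*} [∀ j, NormedAddCommGroup (Hs j)]
    [∀ j, InnerProductSpace ℂ (Hs j)] [∀ j, CompleteSpace (Hs j)]
    (W : ι → Submodule ℂ H) [∀ j, CompleteSpace (W j)]
    (v : ι → ℝ)
    (Λ : ∀ j, H →L[ℂ] Hs j)
    (SΛ Sinv : H →L[ℂ] H)
    (hSΛ : ∀ f : H,
      HasSum (fun j => ((v j : ℂ) ^ 2) • pProj (W j) (adjoint (Λ j) (Λ j (pProj (W j) f)))) (SΛ f))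
    (hinv₁ : Sinv ∘L SΛ = 1) (hinv₂ : SΛ ∘L Sinv = 1)
    (R : H →L[ℂ] H) (hR : R.IsPositive) (hRR : R ∘L R = Sinv)
    (I : Set ι) (SIc : H →L[ℂ] H)
    (hSIc : ∀ f : H,
      HasSum (fun j : ↥Iᶜ => ((v j : ℂ) ^ 2) •
        pProj (W j) (adjoint (Λ j) (Λ j (pProj (W j) f)))) (SIc f)) :
    ∀ f : H,
      3 / 4 * ‖Sinv‖⁻¹ * ‖f‖ ^ 2 ≤
        (∑' j : I, (v j) ^ 2 * ‖Λ j (pProj (W j) f)‖ ^ 2) + ‖R (SIc f)‖ ^ 2 := by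
  intro f
  have hRSR : R * (SΛ * R) = 1 := mul_mul_eq_one_of_mul_self_eq_inverse hRR hinv₁ hinv₂
  have hRsa : IsSelfAdjoint R := hR.isSelfAdjoint
  obtain ⟨h, rfl⟩ : ∃ h, R h = f := ⟨SΛ (R f), congr($hRSR f)⟩
  have htotal := hasSum_weighted_norm_sq W v Λ (hSΛ (R h))
  have hIc :=
    hasSum_weighted_norm_sq (fun j : ↥Iᶜ => W j) (fun j => v j) (fun j => Λ j) (hSIc (R h))
  have hsplit := Summable.tsum_add_tsum_compl (s := I)
    (htotal.summable.subtype _) (htotal.summable.subtype _)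
  rw [hIc.tsum_eq, htotal.tsum_eq, re_inner_apply_apply_eq_norm_sq hRsa hRSR] at hsplit
  exact three_quarters_mul_inv_mul_le (norm_nonneg _)
    (hRR ▸ norm_apply_sq_le_norm_mul_self_mul hRsa h) hsplit
    (re_inner_apply_le_norm_mul_norm hRsa h _)

theorem stmt14 {H : Type*} [NormedAddCommGroup H] [InnerProductSpace ℂ H] [CompleteSpace H]
    {ι : Type*} {Hs : ι → Type*} [∀ j, NormedAddCommGroup (Hs j)]
    [∀ j, InnerProductSpace ℂ (Hs j)] [∀ j, CompleteSpace (Hs j)]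
    (W : ι → Submodule ℂ H) [∀ j, CompleteSpace (W j)]
    (v : ι → ℝ) (hv : ∀ j, 0 < v j)
    (Λ : ∀ j, H →L[ℂ] Hs j) (A B : ℝ) (hA : 0 < A) (hAB : A ≤ B)
    (hsum : ∀ f : H, Summable fun j => (v j) ^ 2 * ‖Λ j (pProj (W j) f)‖ ^ 2)
    (hlow : ∀ f : H, A * ‖f‖ ^ 2 ≤ ∑' j, (v j) ^ 2 * ‖Λ j (pProj (W j) f)‖ ^ 2)
    (hup : ∀ f : H, ∑' j, (v j) ^ 2 * ‖Λ j (pProj (W j) f)‖ ^ 2 ≤ B * ‖f‖ ^ 2)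
    (SΛ Sinv : H →L[ℂ] H)
    (hSΛ : ∀ f : H,
      HasSum (fun j => ((v j : ℂ) ^ 2) • pProj (W j) (adjoint (Λ j) (Λ j (pProj (W j) f)))) (SΛ f))
    (hSΛpos : SΛ.IsPositive)
    (hinv₁ : Sinv ∘L SΛ = 1) (hinv₂ : SΛ ∘L Sinv = 1)
    (R : H →L[ℂ] H) (hR : R.IsPositive) (hRR : R ∘L R = Sinv)
    (I : Set ι) (SIc : H →L[ℂ] H)
    (hSIc : ∀ f : H,
      HasSum (fun j : ↥Iᶜ => ((v j : ℂ) ^ 2) •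
        pProj (W j) (adjoint (Λ j) (Λ j (pProj (W j) f)))) (SIc f)) :
    ∀ f : H,
      3 / 4 * ‖Sinv‖⁻¹ * ‖f‖ ^ 2 ≤
        (∑' j : I, (v j) ^ 2 * ‖Λ j (pProj (W j) f)‖ ^ 2) + ‖R (SIc f)‖ ^ 2 :=
  stmt14_general W v Λ SΛ Sinv hSΛ hinv₁ hinv₂ R hR hRR I SIc hSIc
end

section
/- Let Λ = (W_j, Λ_j, v_j) be a g-fusion frame with frame operator S_Λ. Then for all f ∈ H: ⟨S_Λ⁻¹ f, f⟩ = Σ_{j∈J} v_j² ‖Λ̃_j π_{W̃_j} f‖², where W̃_j = S_Λ⁻¹ W_j and Λ̃_j = Λ_j π_{W_j} S_Λ⁻¹. -/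
/-!
Put `g = S⁻¹ f`. Since `S⁻¹` is self-adjoint and maps `W j` into `W̃ j`, the vector
`S⁻¹ (f - π_{W̃ j} f)` is orthogonal to `W j`, so `Λ̃ j (π_{W̃ j} f) = Λ j (π_{W j} g)`.
Hence the right-hand side is the quadratic form `⟪g, S g⟫ = ⟪S⁻¹ f, f⟫` of the frame operator.
-/

open ContinuousLinearMap

theorem IsSelfAdjoint.of_mul_eq_one {R : Type*} [Monoid R] [StarMul R] {s t : R}
    (hs : IsSelfAdjoint s) (h : s * t = 1) : IsSelfAdjoint t := by
  have hts : star t * s = 1 := by simpa [hs.star_eq] using congr(star $h)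
  calc star t = star t * (s * t) := by rw [h, mul_one]
    _ = t := by rw [← mul_assoc, hts, one_mul]

section InnerProductSpace

variable {𝕜 E F : Type*} [RCLike 𝕜]
  [NormedAddCommGroup E] [InnerProductSpace 𝕜 E] [CompleteSpace E]
  [NormedAddCommGroup F] [InnerProductSpace 𝕜 F] [CompleteSpace F]

local notation "⟪" x ", " y "⟫" => inner 𝕜 x y

theorem Submodule.starProjection_comp_adjoint_comp_starProjection {T : E →L[𝕜] F}
    {V : Submodule 𝕜 E} {U : Submodule 𝕜 F} [V.HasOrthogonalProjection]
    [U.HasOrthogonalProjection] (hVU : V.map (T : E →ₗ[𝕜] F) ≤ U) :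
    V.starProjection ∘L adjoint T ∘L U.starProjection = V.starProjection ∘L adjoint T := by
  ext x
  have hperp : adjoint T (x - U.starProjection x) ∈ Vᗮ := by
    rw [Submodule.mem_orthogonal]
    intro w hw
    rw [adjoint_inner_right]
    exact Submodule.inner_right_of_mem_orthogonal (hVU ⟨w, hw, rfl⟩)
      (U.sub_starProjection_mem_orthogonal x)
  have hzero := (V.starProjection_apply_eq_zero_iff).mpr hperp
  rw [map_sub, map_sub, sub_eq_zero] at hzero
  exact hzero.symm

theorem inner_starProjection_adjoint_apply_starProjection (V : Submodule 𝕜 E)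
    [V.HasOrthogonalProjection] (T : E →L[𝕜] F) (g : E) :
    ⟪g, V.starProjection (adjoint T (T (V.starProjection g)))⟫
      = (‖T (V.starProjection g)‖ ^ 2 : ℝ) := by
  rw [← Submodule.inner_starProjection_left_eq_right, adjoint_inner_right,
    inner_self_eq_norm_sq_to_K, RCLike.ofReal_pow]

theorem hasSum_inner_apply_of_hasSum_frameOperator {ι : Type*} {Fs : ι → Type*}
    [∀ j, NormedAddCommGroup (Fs j)] [∀ j, InnerProductSpace 𝕜 (Fs j)]
    [∀ j, CompleteSpace (Fs j)] (W : ι → Submodule 𝕜 E) [∀ j, (W j).HasOrthogonalProjection]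
    (v : ι → ℝ) (Λ : ∀ j, E →L[𝕜] Fs j) (S : E →L[𝕜] E) {g : E}
    (hS : HasSum (fun j => ((v j : 𝕜) ^ 2) •
      (W j).starProjection (adjoint (Λ j) (Λ j ((W j).starProjection g)))) (S g)) :
    HasSum (fun j => ((v j ^ 2 * ‖Λ j ((W j).starProjection g)‖ ^ 2 : ℝ) : 𝕜)) ⟪g, S g⟫ := by
  convert hS.mapL (innerSL 𝕜 g) using 1
  · ext j
    rw [innerSL_apply_apply, inner_smul_right, inner_starProjection_adjoint_apply_starProjection]
    norm_cast
  · rw [innerSL_apply_apply]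

end InnerProductSpace

theorem stmt18_general {H : Type*} [NormedAddCommGroup H] [InnerProductSpace ℂ H] [CompleteSpace H]
    {ι : Type*} {Hs : ι → Type*} [∀ j, NormedAddCommGroup (Hs j)]
    [∀ j, InnerProductSpace ℂ (Hs j)] [∀ j, CompleteSpace (Hs j)]
    (W : ι → Submodule ℂ H) [∀ j, CompleteSpace (W j)]
    (v : ι → ℝ)
    (Λ : ∀ j, H →L[ℂ] Hs j)
    (SΛ Sinv : H →L[ℂ] H)
    (hSΛ : ∀ f : H,
      HasSum (fun j => ((v j : ℂ) ^ 2) • pProj (W j) (adjoint (Λ j) (Λ j (pProj (W j) f)))) (SΛ f))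
    (hSΛpos : SΛ.IsPositive)
    (hinv₂ : SΛ ∘L Sinv = 1)
    (Wd : ι → Submodule ℂ H) [∀ j, CompleteSpace (Wd j)]
    (hWd : ∀ j, Wd j = Submodule.map (Sinv : H →ₗ[ℂ] H) (W j))
    (Λd : ∀ j, H →L[ℂ] Hs j) (hΛd : ∀ j, Λd j = (Λ j ∘L pProj (W j)) ∘L Sinv) :
    ∀ f : H,
      (inner ℂ (Sinv f) f : ℂ) = (∑' j, ((v j) ^ 2 * ‖Λd j (pProj (Wd j) f)‖ ^ 2 : ℝ) : ℝ) := by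
  intro f
  have hSinv : adjoint Sinv = Sinv := (hSΛpos.isSelfAdjoint.of_mul_eq_one hinv₂).adjoint_eq
  have hf : SΛ (Sinv f) = f := by simpa using congr($hinv₂ f)
  have hterm : ∀ j, Λd j (pProj (Wd j) f) = Λ j (pProj (W j) (Sinv f)) := fun j => by
    have hproj := Submodule.starProjection_comp_adjoint_comp_starProjection (hWd j).ge
    rw [hSinv] at hproj
    rw [hΛd]
    exact congr(Λ j ($hproj f))
  calc inner ℂ (Sinv f) f = inner ℂ (Sinv f) (SΛ (Sinv f)) := by rw [hf]
    _ = ∑' j, ((v j ^ 2 * ‖Λ j (pProj (W j) (Sinv f))‖ ^ 2 : ℝ) : ℂ) :=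
      (hasSum_inner_apply_of_hasSum_frameOperator W v Λ SΛ (hSΛ (Sinv f))).tsum_eq.symm
    _ = _ := by simp_rw [← Complex.ofReal_tsum, hterm]

theorem stmt18 {H : Type*} [NormedAddCommGroup H] [InnerProductSpace ℂ H] [CompleteSpace H]
    {ι : Type*} {Hs : ι → Type*} [∀ j, NormedAddCommGroup (Hs j)]
    [∀ j, InnerProductSpace ℂ (Hs j)] [∀ j, CompleteSpace (Hs j)]
    (W : ι → Submodule ℂ H) [∀ j, CompleteSpace (W j)]
    (v : ι → ℝ) (hv : ∀ j, 0 < v j)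
    (Λ : ∀ j, H →L[ℂ] Hs j) (A B : ℝ) (hA : 0 < A) (hAB : A ≤ B)
    (hsum : ∀ f : H, Summable fun j => (v j) ^ 2 * ‖Λ j (pProj (W j) f)‖ ^ 2)
    (hlow : ∀ f : H, A * ‖f‖ ^ 2 ≤ ∑' j, (v j) ^ 2 * ‖Λ j (pProj (W j) f)‖ ^ 2)
    (hup : ∀ f : H, ∑' j, (v j) ^ 2 * ‖Λ j (pProj (W j) f)‖ ^ 2 ≤ B * ‖f‖ ^ 2)
    (SΛ Sinv : H →L[ℂ] H)
    (hSΛ : ∀ f : H,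
      HasSum (fun j => ((v j : ℂ) ^ 2) • pProj (W j) (adjoint (Λ j) (Λ j (pProj (W j) f)))) (SΛ f))
    (hSΛpos : SΛ.IsPositive)
    (hinv₁ : Sinv ∘L SΛ = 1) (hinv₂ : SΛ ∘L Sinv = 1)
    (Wd : ι → Submodule ℂ H) [∀ j, CompleteSpace (Wd j)]
    (hWd : ∀ j, Wd j = Submodule.map (Sinv : H →ₗ[ℂ] H) (W j))
    (Λd : ∀ j, H →L[ℂ] Hs j) (hΛd : ∀ j, Λd j = (Λ j ∘L pProj (W j)) ∘L Sinv) :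
    ∀ f : H,
      (inner ℂ (Sinv f) f : ℂ) = (∑' j, ((v j) ^ 2 * ‖Λd j (pProj (Wd j) f)‖ ^ 2 : ℝ) : ℝ) :=
  stmt18_general W v Λ SΛ Sinv hSΛ hSΛpos hinv₂ Wd hWd Λd hΛd
end
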